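/- arXiv:1811.11737 — 3 statements merged into one kernel-verified Lean document; each statement's English description precedes it below -/
import Mathlib

section
/- Let Γ be a set of subsets of a set A and define the encoding I(Q) := the downset of (ℕ^Γ, ⊑) generated by {pt(ρ) : ρ ∈ Q} for Q ⊆ DD(Γ). If Q₁, Q₂ ⊆ DD(Γ) satisfy I(Q₁) ⊆ I(Q₂), then Pol(Q₂) ⊆ Pol(Q₁). -/
/-- The `n`-ary cross relation defined by the tuple `γ` of unary relations:
`{(x₁,…,xₙ) : x₁ ∈ γ₁ ∨ … ∨ xₙ ∈ γₙ}`. -/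
def Cross {A : Type*} {n : ℕ} (γ : Fin n → Set A) : Set (Fin n → A) :=
  {x | ∃ i, x i ∈ γ i}

/-- A finitary relation on `A`: an arity together with a set of tuples. -/
abbrev FinRel (A : Type*) := Σ n : ℕ, Set (Fin n → A)

/-- A `k`-ary operation `f` preserves an `n`-ary relation `ρ`. -/
def Preserves {A : Type*} {k n : ℕ} (f : (Fin k → A) → A) (ρ : Set (Fin n → A)) : Prop :=
  ∀ r : Fin k → Fin n → A, (∀ j, r j ∈ ρ) → (fun i => f fun j => r j i) ∈ ρ

/-- A finitary operation on `A` of positive arity `k + 1`. -/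
abbrev Op (A : Type*) := Σ k : ℕ, (Fin (k + 1) → A) → A

/-- The polymorphism clone of a set of finitary relations. -/
def Pol {A : Type*} (Q : Set (FinRel A)) : Set (Op A) :=
  {f | ∀ ρ ∈ Q, Preserves f.2 ρ.2}

/-- Relations disjunctively definable from the unary language `Γ`. -/
def DD {A : Type*} (Γ : Set (Set A)) : Set (FinRel A) :=
  {ρ | 1 ≤ ρ.1 ∧ ∃ γ : Fin ρ.1 → Set A, (∀ i, γ i ∈ Γ) ∧ ρ.2 = Cross γ}

/-- Support of a tuple of naturals. -/
def supp {I : Type*} (x : I → ℕ) : Set I := {i | x i ≠ 0}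

/-- The order `⊑` on `ℕ^I`: pointwise `≤` together with equal supports. -/
def sle {I : Type*} (x y : I → ℕ) : Prop := (∀ i, x i ≤ y i) ∧ supp x = supp y

/-- Downsets of the poset `(ℕ^I, ⊑)`. -/
def IsSleDownset {I : Type*} (X : Set (I → ℕ)) : Prop :=
  ∀ x ∈ X, ∀ y, sle y x → y ∈ X

open Classical in
/-- The canonical parameter tuple of a relation: the unique tuple of members of `Γ`
defining it as a cross if it is a proper subset of the full power, and `(A,…,A)` otherwise. -/
noncomputable def param {A : Type*} (Γ : Set (Set A)) (ρ : FinRel A) : Fin ρ.1 → Set A :=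
  if ρ.2 = Set.univ then fun _ => Set.univ
  else if h : ∃ γ : Fin ρ.1 → Set A, (∀ i, γ i ∈ Γ) ∧ ρ.2 = Cross γ then h.choose
  else fun _ => ∅

/-- The pattern of a relation: how often each `γ ∈ Γ` occurs in its canonical parameter. -/
noncomputable def pt {A : Type*} (Γ : Set (Set A)) (ρ : FinRel A) : ↥Γ → ℕ :=
  fun γ => Nat.card {i : Fin ρ.1 // param Γ ρ i = (γ : Set A)}

/-- The encoding map `I`: the downset of `(ℕ^Γ, ⊑)` generated by the patterns of `Q`. -/
def enc {A : Type*} (Γ : Set (Set A)) (Q : Set (FinRel A)) : Set (↥Γ → ℕ) :=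
  {x | ∃ ρ ∈ Q, sle x (pt Γ ρ)}

/-- `F^Inv`: the relations in `DD Γ` preserved by every operation in `F`. -/
def InvDD {A : Type*} (Γ : Set (Set A)) (F : Set (Op A)) : Set (FinRel A) :=
  {ρ | ρ ∈ DD Γ ∧ ∀ f ∈ F, Preserves f.2 ρ.2}


/-!
A cross relation `Cross γ` is preserved by every operation preserving `Cross δ` as soon as
`δ = γ ∘ σ` for a surjective reindexing `σ`: a tuple of `Cross γ` becomes a tuple of `Cross δ`
by duplicating coordinates, and back. For `ρ₁ ≠ Aⁿ` and `pt ρ₁ ⊑ pt ρ₂`, every parameter of `ρ₁` occurs in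
`p(ρ₂)` at least as often as in `p(ρ₁)` (and only parameters of `ρ₁` occur in `p(ρ₂)`), so such
a `σ` maps each fibre of `p(ρ₂)` onto the corresponding fibre of `p(ρ₁)`.
-/

open Function

theorem exists_surjective_of_card_le {α β : Type*} [Finite α] [Finite β]
    (hcard : Nat.card β ≤ Nat.card α) (hne : Nonempty α → Nonempty β) :
    ∃ f : α → β, Surjective f := by
  have := Fintype.ofFinite α
  have := Fintype.ofFinite β
  rw [Nat.card_eq_fintype_card, Nat.card_eq_fintype_card] at hcard
  refine exists_surjective_iff.2 ⟨nonempty_fun.2 ?_, Embedding.nonempty_of_card_le hcard⟩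
  exact (isEmpty_or_nonempty α).imp id hne

theorem exists_surjective_comp_eq_of_card_fiber_le {α β X : Type*} [Finite α] [Finite β]
    {γ : α → X} {δ : β → X}
    (hcard : ∀ s, Nat.card {a // γ a = s} ≤ Nat.card {b // δ b = s})
    (hrange : ∀ b, ∃ a, γ a = δ b) :
    ∃ σ : β → α, Surjective σ ∧ ∀ b, γ (σ b) = δ b := by
  have hfiber : ∀ s, ∃ g : {b // δ b = s} → {a // γ a = s}, Surjective g := fun s =>
    exists_surjective_of_card_le (hcard s) fun ⟨⟨b, hb⟩⟩ =>
      let ⟨a, ha⟩ := hrange b; ⟨⟨a, ha.trans hb⟩⟩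
  choose g hg using hfiber
  let σ := Equiv.sigmaFiberEquiv γ ∘ Sigma.map id g ∘ (Equiv.sigmaFiberEquiv δ).symm
  refine ⟨σ, ?_, fun b => (g (δ b) ⟨b, rfl⟩).2⟩
  exact (Equiv.surjective _).comp
    ((surjective_id.sigma_map hg).comp (Equiv.surjective _))

theorem Preserves.cross_of_surjective {A : Type*} {k n m : ℕ} {f : (Fin k → A) → A}
    {γ : Fin n → Set A} {δ : Fin m → Set A} {σ : Fin m → Fin n}
    (hf : Preserves f (Cross δ)) (hσ : Surjective σ) (hcomp : ∀ j, γ (σ j) = δ j) :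
    Preserves f (Cross γ) := by
  intro r hr
  have hr' : ∀ l, (fun j => r l (σ j)) ∈ Cross δ := by
    intro l
    obtain ⟨i, hi⟩ := hr l
    obtain ⟨j, rfl⟩ := hσ i
    exact ⟨j, hcomp j ▸ hi⟩
  obtain ⟨j, hj⟩ := hf _ hr'
  exact ⟨σ j, (hcomp j).symm ▸ hj⟩

section Param

variable {A : Type*} {Γ : Set (Set A)} {ρ : FinRel A}

theorem param_spec_of_ne_univ (hρ : ρ ∈ DD Γ) (hne : ρ.2 ≠ Set.univ) :
    (∀ i, param Γ ρ i ∈ Γ) ∧ ρ.2 = Cross (param Γ ρ) := by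
  rw [param, if_neg hne, dif_pos hρ.2]
  exact hρ.2.choose_spec

theorem eq_cross_param (hρ : ρ ∈ DD Γ) : ρ.2 = Cross (param Γ ρ) := by
  by_cases hu : ρ.2 = Set.univ
  · rw [param, if_pos hu, hu]
    refine (Set.eq_univ_of_forall fun _ => ?_).symm
    exact ⟨⟨0, hρ.1⟩, Set.mem_univ _⟩
  · exact (param_spec_of_ne_univ hρ hu).2

theorem pt_ne_zero_iff {s : ↥Γ} : pt Γ ρ s ≠ 0 ↔ ∃ i, param Γ ρ i = s := by
  simp only [pt, ne_eq, Nat.card_eq_zero, not_or, not_isEmpty_iff, nonempty_subtype,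
    not_infinite_iff_finite]
  exact and_iff_left inferInstance

theorem param_mem_of_pt_ne_zero (hρ : ρ ∈ DD Γ) {s : ↥Γ} (hs : pt Γ ρ s ≠ 0) (i : Fin ρ.1) :
    param Γ ρ i ∈ Γ := by
  by_cases hu : ρ.2 = Set.univ
  · obtain ⟨j, hj⟩ := pt_ne_zero_iff.1 hs
    have hconst : ∀ j, param Γ ρ j = Set.univ := by simp [param, hu]
    exact hconst i ▸ hconst j ▸ hj ▸ s.2
  · exact (param_spec_of_ne_univ hρ hu).1 i

end Param

theorem exists_surjective_param_comp_eq_of_sle {A : Type*} {Γ : Set (Set A)} {ρ₁ ρ₂ : FinRel A}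
    (hρ₁ : ρ₁ ∈ DD Γ) (hne : ρ₁.2 ≠ Set.univ) (hρ₂ : ρ₂ ∈ DD Γ) (hle : sle (pt Γ ρ₁) (pt Γ ρ₂)) :
    ∃ σ : Fin ρ₂.1 → Fin ρ₁.1, Surjective σ ∧ ∀ j, param Γ ρ₁ (σ j) = param Γ ρ₂ j := by
  obtain ⟨hmem₁, -⟩ := param_spec_of_ne_univ hρ₁ hne
  have hsupp : ∀ s : ↥Γ, pt Γ ρ₁ s ≠ 0 ↔ pt Γ ρ₂ s ≠ 0 := fun s => Set.ext_iff.1 hle.2 s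
  have hmem₂ : ∀ j, param Γ ρ₂ j ∈ Γ := by
    let s : ↥Γ := ⟨param Γ ρ₁ ⟨0, hρ₁.1⟩, hmem₁ _⟩
    exact param_mem_of_pt_ne_zero hρ₂ ((hsupp s).1 (pt_ne_zero_iff.2 ⟨_, rfl⟩))
  refine exists_surjective_comp_eq_of_card_fiber_le (fun s => ?_) fun j => ?_
  · by_cases hs : s ∈ Γ
    · exact hle.1 ⟨s, hs⟩
    · have : IsEmpty {i // param Γ ρ₁ i = s} := ⟨fun i => hs (i.2 ▸ hmem₁ i)⟩
      simp
  · exact pt_ne_zero_iff.1 <| (hsupp ⟨_, hmem₂ j⟩).2 <| pt_ne_zero_iff.2 ⟨j, rfl⟩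

/-- If the downsets of `(ℕ^Γ, ⊑)` generated by the patterns of `Q₁` and `Q₂` are
included in one another, then the polymorphism clones satisfy the dual inclusion. -/
theorem pol_antitone_of_enc_subset {A : Type*} (Γ : Set (Set A))
    (Q₁ Q₂ : Set (FinRel A)) (hQ₁ : Q₁ ⊆ DD Γ) (hQ₂ : Q₂ ⊆ DD Γ)
    (h : enc Γ Q₁ ⊆ enc Γ Q₂) :
    Pol Q₂ ⊆ Pol Q₁ := by
  intro f hf ρ₁ hρ₁
  by_cases hu : ρ₁.2 = Set.univ
  · exact fun _ _ => hu ▸ Set.mem_univ _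
  obtain ⟨ρ₂, hρ₂, hle⟩ := h ⟨ρ₁, hρ₁, fun _ => le_rfl, rfl⟩
  obtain ⟨σ, hσ, hcomp⟩ :=
    exists_surjective_param_comp_eq_of_sle (hQ₁ hρ₁) hu (hQ₂ hρ₂) hle
  have hf₂ : Preserves f.2 (Cross (param Γ ρ₂)) := eq_cross_param (hQ₂ hρ₂) ▸ hf ρ₂ hρ₂
  rw [eq_cross_param (hQ₁ hρ₁)]
  exact hf₂.cross_of_surjective hσ hcomp
end

section
/- For every finite set Γ of subsets of a set A (a finite unary relational language), the set {Pol(Q) : Q ⊆ DD(Γ)} of polymorphism clones determined by sets of relations disjunctively definable from Γ is countable (of cardinality at most ℵ₀). -/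
/-!
A clone `Pol Q` with `Q ⊆ DD Γ` is `Pol` of the set of all relations of `DD Γ` it preserves, and
those relations are coded by words over `Γ`. If a word `w` is obtained from `w'` by merging
repeated letters (`w ∘ π = w'` for a surjection `π`), every operation preserving `R(w')` preserves
`R(w)`. Whether such a `π` exists depends only on the letter counts, so by Dickson's lemma the
codes of the preserved relations form a lower set of a countable well-quasi-order. Such a lower
set is the complement of the upward closure of its finitely many minimal non-members, so there
are only countably many of them.
-/

open Function

theorem Preserves.of_comp_surjective {A : Type*} {k n m : ℕ} {f : (Fin k → A) → A}
    {γ : Fin n → Set A} {γ' : Fin m → Set A} {π : Fin m → Fin n} (hπ : Surjective π)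
    (hγ : γ ∘ π = γ') (h : Preserves f (Cross γ')) : Preserves f (Cross γ) := by
  subst hγ
  intro r hr
  have hr' : ∀ j, (fun c => r j (π c)) ∈ Cross (γ ∘ π) := by
    intro j
    obtain ⟨i, hi⟩ := hr j
    obtain ⟨c, rfl⟩ := hπ i
    exact ⟨c, hi⟩
  obtain ⟨c, hc⟩ := h _ hr'
  exact ⟨π c, hc⟩

section GaloisConnection

variable {A : Type*}

def Invariants (F : Set (Op A)) : Set (FinRel A) :=
  {ρ | ∀ f ∈ F, Preserves f.2 ρ.2}

theorem subset_pol_iff {F : Set (Op A)} {Q : Set (FinRel A)} :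
    F ⊆ Pol Q ↔ Q ⊆ Invariants F :=
  ⟨fun h _ hρ _ hf => h hf _ hρ, fun h _ hf _ hρ => h hρ _ hf⟩

theorem pol_antitone : Antitone (Pol : Set (FinRel A) → Set (Op A)) :=
  fun _ _ h _ hf ρ hρ => hf ρ (h hρ)

theorem pol_inter_invariants_pol {Q R : Set (FinRel A)} (h : Q ⊆ R) :
    Pol (R ∩ Invariants (Pol Q)) = Pol Q :=
  (pol_antitone (Set.subset_inter h (subset_pol_iff.1 subset_rfl))).antisymm
    (subset_pol_iff.2 Set.inter_subset_right)

end GaloisConnection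

theorem DD_eq_image {A : Type*} (Γ : Set (Set A)) :
    DD Γ = (fun x : Σ n, Fin n → Γ => (⟨x.1, Cross fun i => (x.2 i : Set A)⟩ : FinRel A)) ''
      {x | 1 ≤ x.1} := by
  ext ρ
  constructor
  · rintro ⟨hn, γ, hγ, h⟩
    exact ⟨⟨_, fun i => ⟨γ i, hγ i⟩⟩, hn, Sigma.ext rfl (heq_of_eq h.symm)⟩
  · rintro ⟨⟨n, γ⟩, hn, h⟩
    cases h
    exact ⟨hn, _, fun i => (γ i).2, rfl⟩

theorem countable_setOf_isLowerSet {α : Type*} [PartialOrder α] [WellQuasiOrderedLE α]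
    [Countable α] : {s : Set α | IsLowerSet s}.Countable := by
  refine ((Set.countable_ofPred_finite_subset (Set.countable_univ (α := α))).image
    fun M => (upperClosure M : Set α)ᶜ).mono ?_
  intro s hs
  refine ⟨{x | Minimal (· ∉ s) x},
    ⟨WellQuasiOrderedLE.finite_of_isAntichain (setOfPred_minimal_antichain _),
      Set.subset_univ _⟩, ?_⟩
  ext x
  simp only [Set.mem_compl_iff, SetLike.mem_coe, mem_upperClosure, Set.mem_ofPred_eq, not_exists,
    not_and]
  constructor
  · intro h
    by_contra hx
    obtain ⟨m, hmx, hm⟩ := exists_minimal_le_of_wellFoundedLT (· ∉ s) x hx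
    exact h m hm hmx
  · exact fun hx m hm hmx => hm.prop (hs hmx hx)

theorem countable_setOf_lowerSet_comap {X α : Type*} [PartialOrder α] [WellQuasiOrderedLE α]
    [Countable α] (key : X → α) :
    {T : Set X | ∀ ⦃x y⦄, key x ≤ key y → y ∈ T → x ∈ T}.Countable := by
  refine (countable_setOf_isLowerSet.image (key ⁻¹' ·)).mono fun T hT => ?_
  refine ⟨lowerClosure (key '' T), (lowerClosure _).lower, ?_⟩
  ext x
  simp only [Set.mem_preimage, SetLike.mem_coe, mem_lowerClosure, Set.exists_mem_image]
  exact ⟨fun ⟨y, hy, hxy⟩ => hT hxy hy, fun hx => ⟨x, hx, le_rfl⟩⟩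

theorem exists_surjective_comp_eq {α β ι : Type*} {f : α → ι} {g : β → ι}
    (h : ∀ c, ∃ σ : {b // g b = c} → {a // f a = c}, Surjective σ) :
    ∃ π : β → α, Surjective π ∧ f ∘ π = g := by
  choose σ hσ using h
  refine ⟨Equiv.sigmaFiberEquiv f ∘ Sigma.map id σ ∘ (Equiv.sigmaFiberEquiv g).symm,
    (Equiv.surjective _).comp ((surjective_id.sigma_map hσ).comp (Equiv.surjective _)), ?_⟩
  funext b
  exact (σ (g b) ⟨b, rfl⟩).2

/-- Ordered componentwise (with `False ≤ True`), `fiberProfile f ≤ fiberProfile g` says that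
every fiber of `g` is at least as large as that of `f` and empty when it is, which is what a
surjection `π` with `f ∘ π = g` needs; Dickson's lemma makes this order a well-quasi-order. -/
def fiberProfile {α ι : Type*} [Fintype α] [DecidableEq ι] (f : α → ι) (c : ι) : ℕ × Prop :=
  (Fintype.card {a // f a = c}, IsEmpty {a // f a = c})

theorem exists_surjective_comp_eq_of_fiberProfile_le {α β ι : Type*} [Fintype α] [Fintype β]
    [DecidableEq ι] {f : α → ι} {g : β → ι} (h : fiberProfile f ≤ fiberProfile g) :
    ∃ π : β → α, Surjective π ∧ f ∘ π = g := by
  refine exists_surjective_comp_eq fun c => exists_surjective_iff.2 ⟨?_, ?_⟩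
  · rcases isEmpty_or_nonempty {a // f a = c} with hc | hc
    · exact nonempty_fun.2 (Or.inl ((h c).2 hc))
    · exact nonempty_fun.2 (Or.inr hc)
  · exact Embedding.nonempty_of_card_le (h c).1

/-- For a finite unary relational language `Γ`, there are at most countably many
polymorphism clones determined by sets of relations disjunctively definable from `Γ`. -/
theorem countable_pol_of_finite_language {A : Type*} (Γ : Set (Set A)) (hΓ : Γ.Finite) :
    {F : Set (Op A) | ∃ Q ⊆ DD Γ, F = Pol Q}.Countable := by
  classical
  have := hΓ.to_subtype
  let cross := fun x : Σ n, Fin n → Γ => (⟨x.1, Cross fun i => (x.2 i : Set A)⟩ : FinRel A)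
  let codes (F : Set (Op A)) := {x | 1 ≤ x.1} ∩ cross ⁻¹' Invariants F
  have hcodes (F : Set (Op A)) : ∀ ⦃x y : Σ n, Fin n → Γ⦄, fiberProfile x.2 ≤ fiberProfile y.2 →
      y ∈ codes F → x ∈ codes F := by
    intro x y hxy hy
    obtain ⟨π, hπ, hcomp⟩ := exists_surjective_comp_eq_of_fiberProfile_le hxy
    refine ⟨(π ⟨0, hy.1⟩).pos, fun f hf => Preserves.of_comp_surjective hπ ?_ (hy.2 f hf)⟩
    rw [← hcomp]
    rfl
  have hPol : ∀ F ∈ {F : Set (Op A) | ∃ Q ⊆ DD Γ, F = Pol Q}, Pol (cross '' codes F) = F := by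
    rintro _ ⟨Q, hQ, rfl⟩
    rw [Set.image_inter_preimage, ← DD_eq_image, pol_inter_invariants_pol hQ]
  refine ((countable_setOf_lowerSet_comap fun x : Σ n, Fin n → Γ => fiberProfile x.2).image
    fun T => Pol (cross '' T)).mono fun F hF => ?_
  exact ⟨codes F, hcodes F, hPol F hF⟩
end

section
/- Let Γ be a finite set of subsets of a set A containing a non-trivial member γ with ∅ ≠ γ ⊊ A. Then both the set {Pol(Q) : Q ⊆ DD(Γ) finite} and the set {Pol(Q) : Q ⊆ DD(Γ)} have cardinality exactly ℵ₀. -/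
/-!
A polymorphism of `R(γ_{σ 1},…,γ_{σ n'})`, for a surjection `σ` of coordinates, is one of
`R(γ₁,…,γₙ)`: precompose the rows with `σ`. Hence `Pol Q` only depends on the lower set generated
by the keys of the crosses in `Q`, the key of a tuple of members of `Γ` recording which members
occur and how often. By Dickson's lemma these keys are well-quasi-ordered, so every lower set is
the complement of the upward closure of finitely many keys, and there are only countably many.
Conversely, pick `a ∈ γ` and `b ∉ γ`: the `(k+2)`-ary operation returning `a` when at least two
arguments lie in `γ`, and `b` otherwise, preserves `R(γ,…,γ)` with `n` coordinates iff
`n ≤ k + 1` (pigeonhole), so these crosses have pairwise distinct clones.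
-/

open Function Set

section Polymorphisms

variable {A : Type*}

theorem mem_pol_singleton {f : Op A} {ρ : FinRel A} : f ∈ Pol {ρ} ↔ Preserves f.2 ρ.2 := by
  simp [Pol]

theorem pol_anti {Q Q' : Set (FinRel A)} (h : Q ⊆ Q') : Pol Q' ⊆ Pol Q :=
  fun _ hf ρ hρ => hf ρ (h hρ)

theorem Preserves.cross_of_cross_comp {k n n' : ℕ} {f : (Fin k → A) → A} {γ : Fin n → Set A}
    {σ : Fin n' → Fin n} (hσ : Surjective σ) (hf : Preserves f (Cross (γ ∘ σ))) :
    Preserves f (Cross γ) := by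
  intro r hr
  have hrσ : ∀ j, r j ∘ σ ∈ Cross (γ ∘ σ) := by
    intro j
    obtain ⟨i, hi⟩ := hr j
    obtain ⟨i', rfl⟩ := hσ i
    exact ⟨i', hi⟩
  obtain ⟨i', hi'⟩ := hf (fun j => r j ∘ σ) hrσ
  exact ⟨σ i', hi'⟩

end Polymorphisms

section TwoOrMore

variable {A : Type*} {γ : Set A} {a b : A}

noncomputable def twoOrMoreIn (γ : Set A) (a b : A) {k : ℕ} (x : Fin k → A) : A :=
  if 2 ≤ {j | x j ∈ γ}.ncard then a else b

theorem preserves_twoOrMoreIn_cross_const_iff (ha : a ∈ γ) (hb : b ∉ γ) {k n : ℕ} :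
    Preserves (twoOrMoreIn γ a b : (Fin (k + 2) → A) → A) (Cross fun _ : Fin n => γ) ↔
      n ≤ k + 1 := by
  constructor
  · intro hf
    by_contra! hn
    set r : Fin (k + 2) → Fin n → A := fun j i => if (j : ℕ) = i then a else b
    have hrows : ∀ j, r j ∈ Cross fun _ : Fin n => γ :=
      fun j => ⟨⟨j, by omega⟩, by simp [r, ha]⟩
    obtain ⟨i, hi⟩ := hf r hrows
    have hdiag : ∀ j, r j i ∈ γ → (j : ℕ) = i := by
      intro j hj
      by_contra hji
      simp only [r, if_neg hji] at hj
      exact hb hj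
    have hcol : {j | r j i ∈ γ}.ncard ≤ 1 :=
      ncard_le_one_iff_subsingleton.2 fun j hj j' hj' =>
        Fin.ext ((hdiag j hj).trans (hdiag j' hj').symm)
    simp only [twoOrMoreIn] at hi
    rw [if_neg (by omega)] at hi
    exact hb hi
  · intro hn r hr
    choose w hw using hr
    obtain ⟨j, j', hne, hjj'⟩ := Fintype.exists_ne_map_eq_of_card_lt w (by simp; omega)
    refine ⟨w j, ?_⟩
    have hpair : ({j, j'} : Set (Fin (k + 2))) ⊆ {x | r x (w j) ∈ γ} := by
      rintro x (rfl | rfl)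
      · exact hw x
      · rw [hjj']; exact hw x
    have htwo : 2 ≤ {x | r x (w j) ∈ γ}.ncard :=
      (Set.ncard_pair hne).symm.le.trans (Set.ncard_le_ncard hpair)
    simp only [twoOrMoreIn, if_pos htwo]
    exact ha

theorem injective_pol_cross_const (ha : a ∈ γ) (hb : b ∉ γ) :
    Injective fun m : ℕ => Pol {(⟨m + 1, Cross fun _ : Fin (m + 1) => γ⟩ : FinRel A)} := by
  have hle : ∀ {m m' : ℕ}, Pol {(⟨m + 1, Cross fun _ : Fin (m + 1) => γ⟩ : FinRel A)} =
      Pol {⟨m' + 1, Cross fun _ : Fin (m' + 1) => γ⟩} → m' ≤ m := by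
    intro m m' h
    have hm : (⟨m + 1, twoOrMoreIn γ a b⟩ : Op A) ∈ Pol {⟨m + 1, Cross fun _ => γ⟩} :=
      mem_pol_singleton.2 ((preserves_twoOrMoreIn_cross_const_iff ha hb).2 le_rfl)
    rw [h, mem_pol_singleton] at hm
    simpa using (preserves_twoOrMoreIn_cross_const_iff ha hb).1 hm
  exact fun m m' h => le_antisymm (hle h.symm) (hle h)

end TwoOrMore

section WellQuasiOrder

theorem exists_finite_subset_forall_exists_le {K : Type*} [PartialOrder K]
    [WellQuasiOrderedLE K] (s : Set K) : ∃ t ⊆ s, t.Finite ∧ ∀ x ∈ s, ∃ y ∈ t, y ≤ x := by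
  have hpwo := isPWO_of_wellQuasiOrderedLE s
  refine ⟨{k | Minimal (· ∈ s) k}, fun k hk => hk.1,
    (setOfPred_minimal_antichain _).finite_of_partiallyWellOrderedOn
      (hpwo.mono fun k hk => hk.1),
    fun x hx => ?_⟩
  obtain ⟨y, hyx, hy⟩ := hpwo.exists_le_minimal hx
  exact ⟨y, hy, hyx⟩

theorem LowerSet.countable_of_wellQuasiOrderedLE {K : Type*} [PartialOrder K]
    [WellQuasiOrderedLE K] [Countable K] : Countable (LowerSet K) := by
  refine Surjective.countable (f := fun t : Finset K => (upperClosure (t : Set K)).compl) ?_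
  intro L
  obtain ⟨t, htL, htfin, ht⟩ := exists_finite_subset_forall_exists_le (L : Set K)ᶜ
  refine ⟨htfin.toFinset, SetLike.ext fun x => ?_⟩
  simp only [Finite.coe_toFinset, UpperSet.mem_compl_iff, mem_upperClosure, not_exists, not_and]
  constructor
  · intro hx
    by_contra hxL
    obtain ⟨y, hy, hyx⟩ := ht x hxL
    exact hx y hy hyx
  · intro hx y hy hyx
    exact htL hy (L.lower hyx hx)

end WellQuasiOrder

section TupleKey

variable {B : Type*}

-- With value sets ordered by reverse inclusion, `tupleKey v ≤ tupleKey w` says that `w` takes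
-- exactly the values of `v`, each at least as often.
abbrev TupleKey (B : Type*) := (B → ℕ) × (Set B)ᵒᵈ

instance [Finite B] : WellQuasiOrderedLE (TupleKey B) :=
  have : WellQuasiOrderedLE (Set B)ᵒᵈ := Finite.to_wellQuasiOrderedLE
  inferInstance

noncomputable def tupleKey (v : Σ n, Fin n → B) : TupleKey B :=
  (fun b => Nat.card {i // v.2 i = b}, OrderDual.toDual (range v.2))

theorem exists_surjective_comp_eq_of_tupleKey_le {v w : Σ n, Fin n → B}
    (h : tupleKey v ≤ tupleKey w) : ∃ σ : Fin w.1 → Fin v.1, Surjective σ ∧ v.2 ∘ σ = w.2 := by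
  have hfiber : ∀ b, ∃ s : {i // w.2 i = b} → {i // v.2 i = b}, Surjective s := by
    intro b
    by_cases hb : ∃ i, v.2 i = b
    · have : Nonempty {i // v.2 i = b} := let ⟨i, hi⟩ := hb; ⟨⟨i, hi⟩⟩
      have := Fintype.ofFinite {i // v.2 i = b}
      have := Fintype.ofFinite {i // w.2 i = b}
      have hcard := h.1 b
      simp only [tupleKey, Nat.card_eq_fintype_card] at hcard
      obtain ⟨e⟩ := Function.Embedding.nonempty_of_card_le hcard
      exact ⟨invFun e, invFun_surjective e.injective⟩
    · have : IsEmpty {i // w.2 i = b} := ⟨fun i => hb (h.2 ⟨i.1, i.2⟩)⟩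
      exact ⟨isEmptyElim, fun i => (hb ⟨i.1, i.2⟩).elim⟩
  choose s hs using hfiber
  refine ⟨fun i => s (w.2 i) ⟨i, rfl⟩, ?_, funext fun i => (s (w.2 i) ⟨i, rfl⟩).2⟩
  have hhit : ∀ b (x : {i // v.2 i = b}), ∃ i, (s (w.2 i) ⟨i, rfl⟩ : Fin v.1) = x := by
    intro b x
    obtain ⟨⟨i, rfl⟩, hi⟩ := hs b x
    exact ⟨i, congrArg Subtype.val hi⟩
  exact fun i => hhit _ ⟨i, rfl⟩

end TupleKey

section Language

variable {A : Type*} {Γ : Set (Set A)}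

def crossRel (Γ : Set (Set A)) (v : Σ n, Fin n → Γ) : FinRel A :=
  ⟨v.1, Cross fun i => (v.2 i : Set A)⟩

theorem dd_subset_range_crossRel : DD Γ ⊆ range (crossRel Γ) := by
  rintro ⟨n, ρ⟩ ⟨-, γ, hγ, hρ⟩
  exact ⟨⟨n, fun i => ⟨γ i, hγ i⟩⟩, (congrArg (Sigma.mk n) hρ).symm⟩

theorem pol_crossRel_subset_of_tupleKey_le {v w : Σ n, Fin n → Γ}
    (h : tupleKey v ≤ tupleKey w) : Pol {crossRel Γ w} ⊆ Pol {crossRel Γ v} := by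
  obtain ⟨σ, hσ, hvσ⟩ := exists_surjective_comp_eq_of_tupleKey_le h
  intro f hf
  rw [mem_pol_singleton] at hf ⊢
  refine Preserves.cross_of_cross_comp hσ ?_
  change Preserves f.2 (Cross fun i => (w.2 i : Set A)) at hf
  rwa [← hvσ] at hf

theorem pol_eq_pol_crossRel_lowerClosure {Q : Set (FinRel A)} (hQ : Q ⊆ DD Γ) :
    Pol Q =
      Pol (crossRel Γ '' {w | tupleKey w ∈ lowerClosure (tupleKey '' (crossRel Γ ⁻¹' Q))}) := by
  refine Subset.antisymm (fun f hf ρ hρ => ?_) (pol_anti ?_)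
  · obtain ⟨w, hw, rfl⟩ := hρ
    obtain ⟨_, ⟨v, hv, rfl⟩, hwv⟩ := mem_lowerClosure.1 hw
    exact mem_pol_singleton.1 <|
      pol_crossRel_subset_of_tupleKey_le hwv (mem_pol_singleton.2 (hf (crossRel Γ v) hv))
  · intro ρ hρ
    obtain ⟨v, rfl⟩ := dd_subset_range_crossRel (hQ hρ)
    exact mem_image_of_mem _ (subset_lowerClosure (mem_image_of_mem _ hρ))

theorem countable_setOf_pol (hΓ : Γ.Finite) :
    {F : Set (Op A) | ∃ Q ⊆ DD Γ, F = Pol Q}.Countable := by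
  have := hΓ.to_subtype
  have := LowerSet.countable_of_wellQuasiOrderedLE (K := TupleKey Γ)
  refine (countable_range fun L : LowerSet (TupleKey Γ) =>
    Pol (crossRel Γ '' {w | tupleKey w ∈ L})).mono ?_
  rintro F ⟨Q, hQ, rfl⟩
  exact ⟨_, (pol_eq_pol_crossRel_lowerClosure hQ).symm⟩

theorem infinite_setOf_pol_finite {γ : Set A} (hγΓ : γ ∈ Γ) (hne : γ.Nonempty)
    (hproper : γ ≠ univ) :
    {F : Set (Op A) | ∃ Q, Q ⊆ DD Γ ∧ Q.Finite ∧ F = Pol Q}.Infinite := by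
  obtain ⟨a, ha⟩ := hne
  obtain ⟨b, hb⟩ := (ne_univ_iff_exists_notMem γ).1 hproper
  refine (infinite_range_of_injective (injective_pol_cross_const ha hb)).mono ?_
  rintro F ⟨m, rfl⟩
  exact ⟨_, singleton_subset_iff.2 ⟨Nat.le_add_left 1 m, fun _ => γ, fun _ => hγΓ, rfl⟩,
    finite_singleton _, rfl⟩

end Language

/-- For a finite unary relational language `Γ` containing a non-trivial member
`∅ ≠ γ ⊊ A`, both the set of polymorphism clones of finite subsets of `DD Γ` and
the set of polymorphism clones of arbitrary subsets of `DD Γ` have cardinality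
exactly `ℵ₀`. -/
theorem mk_pol_eq_aleph0_of_finite_language {A : Type*} (Γ : Set (Set A))
    (hΓ : Γ.Finite) (γ : Set A) (hγΓ : γ ∈ Γ) (hne : γ.Nonempty)
    (hproper : γ ≠ Set.univ) :
    Cardinal.mk {F : Set (Op A) | ∃ Q, Q ⊆ DD Γ ∧ Q.Finite ∧ F = Pol Q} =
        Cardinal.aleph0 ∧
      Cardinal.mk {F : Set (Op A) | ∃ Q ⊆ DD Γ, F = Pol Q} = Cardinal.aleph0 := by
  have hsub : {F : Set (Op A) | ∃ Q, Q ⊆ DD Γ ∧ Q.Finite ∧ F = Pol Q} ⊆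
      {F | ∃ Q ⊆ DD Γ, F = Pol Q} := fun F ⟨Q, hQ, _, hF⟩ => ⟨Q, hQ, hF⟩
  have hcount := countable_setOf_pol hΓ
  have hinf := infinite_setOf_pol_finite hγΓ hne hproper
  have := hcount.to_subtype
  have := (hcount.mono hsub).to_subtype
  have := hinf.to_subtype
  have := (hinf.mono hsub).to_subtype
  exact ⟨Cardinal.mk_eq_aleph0 _, Cardinal.mk_eq_aleph0 _⟩
end
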